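/- Diminishing-step-size convergence of the convex HierFAVG bound: fix κ₁, κ₂ ≥ 1, β, ρ > 0, δ, Δ ≥ 0, φ > 0 and ε > 0. Let (η_q) be positive step sizes with η_q·β ≤ 1 for all q, Σ_{q=1}^∞ η_q = ∞ and Σ_{q=1}^∞ η_q² < ∞, and let for each q, φ_q ≥ φ and ε_q ≥ ε. Then the partial sums S_B = Σ_{q=1}^{B} (η_q φ_q − ρ·G_c(κ₁κ₂, η_q)/(κ₁κ₂ ε_q²)) tend to +∞ as B → ∞, and consequently the convergence upper bound 1/S_B of HierFAVG tends to 0. -/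

import Mathlib

/-- The deviation function h(x, δ, η) = (δ/β)((ηβ+1)^x − 1) − ηδx (real exponent). -/
noncomputable def hfun (β x δ η : ℝ) : ℝ := δ / β * ((η * β + 1) ^ x - 1) - η * δ * x

/-- End-of-interval value of the convex HierFAVG deviation bound:
G_c(κ₁κ₂, η) = h(κ₁κ₂, Δ, η) + h(κ₁, δ, η) + (κ₁/2)(κ₂² + κ₂ − 2)·h(κ₁, δ, η). -/
noncomputable def GcEnd (β δ Δ : ℝ) (κ₁ κ₂ : ℕ) (η : ℝ) : ℝ :=
  hfun β ((κ₁ : ℝ) * κ₂) Δ η + hfun β (κ₁ : ℝ) δ η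
  + (κ₁ : ℝ) / 2 * ((κ₂ : ℝ) ^ 2 + (κ₂ : ℝ) - 2) * hfun β (κ₁ : ℝ) δ η

/-!
STATEMENT 12: diminishing-step-size convergence of the convex HierFAVG bound:
with Ση_q = ∞, Ση_q² < ∞, η_qβ ≤ 1, φ_q ≥ φ > 0 and ε_q ≥ ε > 0, the partial sums
S_B = Σ_{q=1}^{B}(η_qφ_q − ρG_c(κ₁κ₂, η_q)/(κ₁κ₂ε_q²)) tend to +∞, hence the
convergence upper bound 1/S_B of HierFAVG tends to 0.
-/

lemma pow_aux (n : ℕ) (t : ℝ) (h0 : 0 ≤ t) (h1 : t ≤ 1) :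
    (1 + t) ^ n ≤ 1 + n * t + n * 2 ^ n * t ^ 2 := by
  induction n with
  | zero => simp
  | succ n ih =>
    have ht1 : (0:ℝ) ≤ 1 + t := by linarith
    have ht3 : t ^ 3 ≤ t ^ 2 := pow_le_pow_of_le_one h0 h1 (by norm_num)
    have hn : (n:ℝ) ≤ 2 ^ (n+1) := by
      have := Nat.lt_two_pow_self (n := n)
      have : (n:ℝ) < 2 ^ n := by exact_mod_cast this
      have h2 : (2:ℝ)^n ≤ 2^(n+1) := by
        apply pow_le_pow_right₀ (by norm_num) (by omega)
      linarith
    have key : (1 + t) ^ (n+1) ≤ (1 + n*t + n*2^n*t^2) * (1+t) := by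
      rw [pow_succ]
      exact mul_le_mul_of_nonneg_right ih ht1
    have h2n : (0:ℝ) ≤ (n:ℝ) * 2^n := by positivity
    have hint1 : (n:ℝ)*2^n*t^3 ≤ (n:ℝ)*2^n*t^2 := mul_le_mul_of_nonneg_left ht3 h2n
    have hint2 : (n:ℝ)*t^2 ≤ 2^(n+1)*t^2 := mul_le_mul_of_nonneg_right hn (sq_nonneg t)
    have hpow : (2:ℝ)^(n+1) = 2*2^n := by ring
    push_cast
    rw [hpow] at hint2 ⊢
    nlinarith [sq_nonneg t]

lemma hfun_bounds (β δ η : ℝ) (n : ℕ) (hβ : 0 < β) (hδ : 0 ≤ δ) (hη : 0 ≤ η)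
    (hηβ : η * β ≤ 1) :
    0 ≤ hfun β (n:ℝ) δ η ∧ hfun β (n:ℝ) δ η ≤ δ * β * n * 2 ^ n * η ^ 2 := by
  have ht0 : 0 ≤ η * β := mul_nonneg hη hβ.le
  have hx : ((η*β+1):ℝ) ^ ((n:ℕ):ℝ) = (1+η*β)^n := by
    rw [Real.rpow_natCast]; ring_nf
  unfold hfun
  rw [hx]
  have hdb : 0 ≤ δ/β := div_nonneg hδ hβ.le
  have bern : 1 + (n:ℝ)*(η*β) ≤ (1+η*β)^n := one_add_mul_le_pow (by linarith) n
  have up : (1+η*β)^n ≤ 1 + n*(η*β) + n*2^n*(η*β)^2 := pow_aux n _ ht0 hηβ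
  have hcanc : δ/β*((n:ℝ)*(η*β)) = η*δ*n := by field_simp
  constructor
  · have h1 := mul_le_mul_of_nonneg_left bern hdb
    nlinarith
  · have h2 := mul_le_mul_of_nonneg_left up hdb
    have e1 : δ/β * (1 + (n:ℝ)*(η*β) + n*2^n*(η*β)^2 - 1)
        = η*δ*n + δ*β*n*2^n*η^2 := by field_simp; ring
    nlinarith

lemma Gc_bounds (β δ Δ : ℝ) (κ₁ κ₂ : ℕ) (hκ₂ : 1 ≤ κ₂) (η : ℝ)
    (hβ : 0 < β) (hδ : 0 ≤ δ) (hΔ : 0 ≤ Δ) (hη : 0 ≤ η) (hηβ : η * β ≤ 1) :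
    0 ≤ GcEnd β δ Δ κ₁ κ₂ η ∧
    GcEnd β δ Δ κ₁ κ₂ η ≤
      (Δ*β*(κ₁*κ₂ : ℕ)*2^(κ₁*κ₂) + (1 + (κ₁:ℝ)/2*((κ₂:ℝ)^2+(κ₂:ℝ)-2)) * (δ*β*κ₁*2^κ₁)) * η^2 := by
  have hcast : ((κ₁:ℝ) * κ₂) = ((κ₁*κ₂ : ℕ) : ℝ) := by push_cast; ring
  have h1 := hfun_bounds β Δ η (κ₁*κ₂) hβ hΔ hη hηβ
  have h2 := hfun_bounds β δ η κ₁ hβ hδ hη hηβ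
  have hc : 0 ≤ (κ₁:ℝ)/2*((κ₂:ℝ)^2+(κ₂:ℝ)-2) := by
    have hk2 : (1:ℝ) ≤ (κ₂:ℝ) := by exact_mod_cast hκ₂
    have hk1 : (0:ℝ) ≤ (κ₁:ℝ) := Nat.cast_nonneg _
    nlinarith
  unfold GcEnd
  rw [hcast]
  constructor
  · have := mul_nonneg hc h2.1
    nlinarith [h1.1, h2.1]
  · have hA := h1.2
    have hB := h2.2
    have hC := mul_le_mul_of_nonneg_left h2.2 hc
    nlinarith

theorem diminishing_stepsize_convex_bound
    (κ₁ κ₂ : ℕ) (hκ₁ : 1 ≤ κ₁) (hκ₂ : 1 ≤ κ₂)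
    (β ρ δ Δ φ ε : ℝ) (hβ : 0 < β) (hρ : 0 < ρ) (hδ : 0 ≤ δ) (hΔ : 0 ≤ Δ)
    (hφ : 0 < φ) (hε : 0 < ε)
    (η : ℕ → ℝ) (hηpos : ∀ q, 0 < η q) (hηβ : ∀ q, η q * β ≤ 1)
    (hdiverge : Filter.Tendsto (fun B => ∑ q ∈ Finset.Icc 1 B, η q)
      Filter.atTop Filter.atTop)
    (hsq : Summable (fun q => η q ^ 2))
    (φq εq : ℕ → ℝ) (hφq : ∀ q, φ ≤ φq q) (hεq : ∀ q, ε ≤ εq q)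
    (S : ℕ → ℝ)
    (hS : ∀ B, S B = ∑ q ∈ Finset.Icc 1 B,
      (η q * φq q - ρ * GcEnd β δ Δ κ₁ κ₂ (η q) / ((κ₁ : ℝ) * κ₂ * εq q ^ 2))) :
    Filter.Tendsto S Filter.atTop Filter.atTop ∧
    Filter.Tendsto (fun B => 1 / S B) Filter.atTop (nhds 0) := by
  set C : ℝ := Δ*β*(κ₁*κ₂ : ℕ)*2^(κ₁*κ₂)
      + (1 + (κ₁:ℝ)/2*((κ₂:ℝ)^2+(κ₂:ℝ)-2)) * (δ*β*κ₁*2^κ₁) with hCdef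
  have hk1R : (0:ℝ) < κ₁ := by exact_mod_cast hκ₁
  have hk2R : (0:ℝ) < κ₂ := by exact_mod_cast hκ₂
  have hmR : (0:ℝ) < (κ₁:ℝ) * κ₂ := mul_pos hk1R hk2R
  have hcnn : 0 ≤ (κ₁:ℝ)/2*((κ₂:ℝ)^2+(κ₂:ℝ)-2) := by
    have : (1:ℝ) ≤ (κ₂:ℝ) := by exact_mod_cast hκ₂
    nlinarith [hk1R.le]
  have hC : 0 ≤ C := by
    have : (0:ℝ) ≤ (κ₁*κ₂ : ℕ) := Nat.cast_nonneg _
    positivity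
  set K : ℝ := ρ * C / ((κ₁:ℝ) * κ₂ * ε^2) with hKdef
  have hK : 0 ≤ K := by positivity
  -- per-term lower bound
  have hterm : ∀ q, φ * η q - K * η q ^ 2
      ≤ η q * φq q - ρ * GcEnd β δ Δ κ₁ κ₂ (η q) / ((κ₁:ℝ) * κ₂ * εq q ^ 2) := by
    intro q
    have hG := Gc_bounds β δ Δ κ₁ κ₂ hκ₂ (η q) hβ hδ hΔ (hηpos q).le (hηβ q)
    have hεq2 : ε^2 ≤ εq q ^ 2 := by nlinarith [hεq q, hε]
    have h1 : φ * η q ≤ η q * φq q := by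
      have := mul_le_mul_of_nonneg_left (hφq q) (hηpos q).le
      linarith [this]
    have h2 : ρ * GcEnd β δ Δ κ₁ κ₂ (η q) / ((κ₁:ℝ) * κ₂ * εq q ^ 2)
        ≤ K * η q ^ 2 := by
      have hnum : ρ * GcEnd β δ Δ κ₁ κ₂ (η q) ≤ ρ * (C * η q ^ 2) :=
        mul_le_mul_of_nonneg_left hG.2 hρ.le
      have hden : (κ₁:ℝ) * κ₂ * ε^2 ≤ (κ₁:ℝ) * κ₂ * εq q ^ 2 :=
        mul_le_mul_of_nonneg_left hεq2 hmR.le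
      have hdpos : (0:ℝ) < (κ₁:ℝ) * κ₂ * ε^2 := by positivity
      have := div_le_div₀ (by positivity) hnum hdpos hden
      calc ρ * GcEnd β δ Δ κ₁ κ₂ (η q) / ((κ₁:ℝ) * κ₂ * εq q ^ 2)
          ≤ ρ * (C * η q ^ 2) / ((κ₁:ℝ) * κ₂ * ε^2) := this
        _ = K * η q ^ 2 := by rw [hKdef]; ring
    linarith
  -- sum lower bound
  set T : ℝ := ∑' q, η q ^ 2 with hT
  have hSB : ∀ B, φ * (∑ q ∈ Finset.Icc 1 B, η q) - K * T ≤ S B := by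
    intro B
    rw [hS B]
    have hsum : ∑ q ∈ Finset.Icc 1 B, (φ * η q - K * η q ^ 2)
        ≤ ∑ q ∈ Finset.Icc 1 B,
          (η q * φq q - ρ * GcEnd β δ Δ κ₁ κ₂ (η q) / ((κ₁:ℝ) * κ₂ * εq q ^ 2)) :=
      Finset.sum_le_sum fun q _ => hterm q
    have hE : ∑ q ∈ Finset.Icc 1 B, η q ^ 2 ≤ T :=
      Summable.sum_le_tsum _ (fun i _ => sq_nonneg _) hsq
    have hKE : K * (∑ q ∈ Finset.Icc 1 B, η q ^ 2) ≤ K * T :=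
      mul_le_mul_of_nonneg_left hE hK
    have : ∑ q ∈ Finset.Icc 1 B, (φ * η q - K * η q ^ 2)
        = φ * (∑ q ∈ Finset.Icc 1 B, η q) - K * (∑ q ∈ Finset.Icc 1 B, η q ^ 2) := by
      rw [Finset.sum_sub_distrib, Finset.mul_sum, Finset.mul_sum]
    linarith
  have hlow : Filter.Tendsto (fun B => φ * (∑ q ∈ Finset.Icc 1 B, η q) - K * T)
      Filter.atTop Filter.atTop := by
    have h1 := hdiverge.const_mul_atTop hφ
    simpa [sub_eq_add_neg] using Filter.tendsto_atTop_add_const_right _ (-(K*T)) h1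
  have hmain : Filter.Tendsto S Filter.atTop Filter.atTop :=
    Filter.tendsto_atTop_mono hSB hlow
  refine ⟨hmain, ?_⟩
  exact (tendsto_inv_atTop_zero.comp hmain).congr (fun B => by simp [one_div])
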